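/- arXiv:1808.06091 — 3 statements merged into one kernel-verified Lean document; each statement's English description precedes it below -/
import Mathlib

section
/- Planar trinities do not have recurrent states: every connected component of the state transition graph of a planar trinity is acyclic. -/
/-!  Combinatorial trinities, Tutte matchings (states), and clock moves,
following Hine and Kálmán, "Clock theorems for triangulated surfaces".

A trinity is encoded combinatorially: `Vertex` is the set of vertices, properly
colored by `vcol` with colors `Fin 3` (0 = red, 1 = green, 2 = blue); `White`
and `Black` are the sets of white and black triangles.  Each triangle has one
vertex of each color (`wvert`, `bvert`) and one edge of each color (the edge of
color `c` being opposite the vertex of color `c`); across its edge of color `c`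
a white triangle `w` meets the black triangle `wadj w c`, and a black triangle
`b` meets the white triangle `badj b c`.  The two triangles sharing an edge of
color `c` share their vertices of the other two colors (`bvert_wadj`).
A planar trinity carries a distinguished outer white triangle (`outer = some o`);
for a toric trinity `outer = none`. -/

structure Trinity where
  Vertex : Type
  White : Type
  Black : Type
  [vertexFintype : Fintype Vertex]
  [whiteFintype : Fintype White]
  [blackFintype : Fintype Black]
  [vertexDecEq : DecidableEq Vertex]
  [whiteDecEq : DecidableEq White]
  [blackDecEq : DecidableEq Black]
  outer : Option White
  vcol : Vertex → Fin 3
  wvert : White → Fin 3 → Vertex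
  bvert : Black → Fin 3 → Vertex
  wadj : White → Fin 3 → Black
  badj : Black → Fin 3 → White
  wvert_col : ∀ w c, vcol (wvert w c) = c
  bvert_col : ∀ b c, vcol (bvert b c) = c
  badj_wadj : ∀ w c, badj (wadj w c) c = w
  wadj_badj : ∀ b c, wadj (badj b c) c = b
  bvert_wadj : ∀ w c c', c' ≠ c → bvert (wadj w c) c' = wvert w c'

attribute [instance] Trinity.vertexFintype Trinity.whiteFintype Trinity.blackFintype
  Trinity.vertexDecEq Trinity.whiteDecEq Trinity.blackDecEq

namespace Trinity

variable (T : Trinity)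

/-- `w` is the outer white triangle. -/
def IsOuter (w : T.White) : Prop := T.outer = some w

instance : DecidablePred T.IsOuter := fun w => decidable_of_iff (T.outer = some w) Iff.rfl

/-- `v` is a root, i.e. a vertex of the outer white triangle (planar case). -/
def IsRoot (v : T.Vertex) : Prop := ∃ w, T.IsOuter w ∧ ∃ c, v = T.wvert w c

/-- A Tutte matching (state): a perfect matching between the non-outer white
triangles and incident non-root vertices.  (For a toric trinity, `IsOuter` and
`IsRoot` are empty conditions, so this is a perfect matching between all white
triangles and all vertices.)  The value on the outer white triangle, if any, is
irrelevant and is normalized by `outer_spec`. -/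
structure State where
  toFun : T.White → T.Vertex
  incident : ∀ w, ∃ c, toFun w = T.wvert w c
  injOn : ∀ w w', ¬ T.IsOuter w → ¬ T.IsOuter w' → toFun w = toFun w' → w = w'
  not_root : ∀ w, ¬ T.IsOuter w → ¬ T.IsRoot (toFun w)
  surj : ∀ v, ¬ T.IsRoot v → ∃ w, ¬ T.IsOuter w ∧ toFun w = v
  outer_spec : ∀ w, T.IsOuter w → toFun w = T.wvert w 0

namespace State

variable {T}

/-- The black triangle through which the arrow representing the match of the
white triangle `w` passes: the arrow of the match `(w, s w)` crosses the edge
of `w` opposite the matched vertex `s w` (the edge of color `vcol (s w)`). -/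
def arrowBlack (s : T.State) (w : T.White) : T.Black := T.wadj w (T.vcol (s.toFun w))

/-- The black triangle `b` is empty in the state `s`: no arrow passes through it. -/
def EmptyAt (s : T.State) (b : T.Black) : Prop :=
  ∀ w, ¬ T.IsOuter w → s.arrowBlack w ≠ b

/-- `b` is a clockwise empty black triangle of `s`:  it is empty and its three
vertices are matched with the three adjacent white triangles in the clockwise
rotational pattern. -/
def IsCW (s : T.State) (b : T.Black) : Prop :=
  s.EmptyAt b ∧ ∀ c, s.toFun (T.badj b c) = T.bvert b (c + 1)

/-- `b` is a counter-clockwise empty black triangle of `s`. -/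
def IsCCW (s : T.State) (b : T.Black) : Prop :=
  s.EmptyAt b ∧ ∀ c, s.toFun (T.badj b c) = T.bvert b (c + 2)

end State

/-- The basic clockwise move (clock move) about the empty black triangle `b`,
turning it from clockwise to counter-clockwise: `t` is obtained from `s` by
changing `b`. -/
def CWMoveAt (s t : T.State) (b : T.Black) : Prop :=
  s.IsCW b ∧ (∀ c, t.toFun (T.badj b c) = T.bvert b (c + 2)) ∧
    ∀ w, (∀ c, w ≠ T.badj b c) → t.toFun w = s.toFun w

/-- A walk in the state transition graph, recording for each step the black
triangle about which the move is performed and the direction of the move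
(`true` = clockwise, `false` = counter-clockwise). -/
inductive Walk : T.State → List (T.Black × Bool) → T.State → Prop
  | nil (s : T.State) : Walk s [] s
  | cw {s t u : T.State} {b : T.Black} {l : List (T.Black × Bool)} :
      T.CWMoveAt s t b → Walk t l u → Walk s ((b, true) :: l) u
  | ccw {s t u : T.State} {b : T.Black} {l : List (T.Black × Bool)} :
      T.CWMoveAt t s b → Walk t l u → Walk s ((b, false) :: l) u

/-- Two states lie in the same connected component of the state transition
graph. -/
def Reaches (s t : T.State) : Prop := ∃ l, T.Walk s l t

/-- A walk consisting of clockwise moves only, about the listed black triangles. -/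
def CWWalk (s : T.State) (l : List T.Black) (t : T.State) : Prop :=
  T.Walk s (l.map fun b => (b, true)) t

/-- A state is recurrent if some non-empty sequence of clockwise moves starts
and ends at it. -/
def Recurrent (s : T.State) : Prop := ∃ l : List T.Black, l ≠ [] ∧ T.CWWalk s l s

/-- `s` belongs to an acyclic component of the state transition graph: no state
in its component is recurrent. -/
def InAcyclic (s : T.State) : Prop := ∀ t, T.Reaches s t → ¬ T.Recurrent t

/-- Two white triangles sharing an adjacent black triangle. -/
def WAdj (w w' : T.White) : Prop := ∃ c c', T.wadj w c = T.wadj w' c'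

/-- Rotation (by one step, in the direction induced by the orientation) of the
white triangles around the vertex `v`. -/
def rotAt (v : T.Vertex) (w : T.White) : T.White :=
  T.badj (T.wadj w (T.vcol v + 1)) (T.vcol v + 2)

/-- The combinatorial data encode a closed connected oriented surface: the
triangles form a connected complex and the link of every vertex is a single
cycle of triangles. -/
def Surface : Prop :=
  (∀ w w' : T.White, Relation.ReflTransGen T.WAdj w w') ∧
  ∀ (v : T.Vertex) (w w' : T.White), T.wvert w (T.vcol v) = v → T.wvert w' (T.vcol v) = v →
    ∃ k : ℕ, (T.rotAt v)^[k] w = w'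

/-- A planar trinity: a trinity on the sphere (Euler characteristic 2) with a
distinguished outer white triangle. -/
def Planar : Prop :=
  T.Surface ∧ T.outer.isSome ∧ Fintype.card T.Vertex = Fintype.card T.White + 2

/-- A toric trinity: a trinity on the torus (Euler characteristic 0), with all
triangles and vertices taking part in matchings. -/
def Toric : Prop :=
  T.Surface ∧ T.outer = none ∧ Fintype.card T.Vertex = Fintype.card T.White

/-- The configuration of a general clock move: three white triangles `W 0, W 1,
W 2` and three vertices `u 0, u 1, u 2` (one of each color) such that `W c`
contains the vertices `u c'` for both colors `c' ≠ c`; the three edges of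
colors `c` of the triangles `W c` then form a closed triangle of edges through
the vertices `u`, bounding a disk on the side opposite to the whites.
(For the boundary of a black triangle `b` this recovers `W = T.badj b`,
`u = T.bvert b`.) -/
def CombConfig (W : Fin 3 → T.White) (u : Fin 3 → T.Vertex) : Prop :=
  ∀ c c' : Fin 3, c' ≠ c → T.wvert (W c) c' = u c'

/-- A general clockwise move from `s` to `t`: about some clock-move
configuration whose three (non-outer) white triangles are matched with its
three vertices, the matching is switched from the clockwise pattern to the
counter-clockwise one, all other matches being kept. -/
def CWMove (s t : T.State) : Prop :=
  ∃ (W : Fin 3 → T.White) (u : Fin 3 → T.Vertex),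
    T.CombConfig W u ∧ (∀ c, ¬ T.IsOuter (W c)) ∧
    (∀ c, s.toFun (W c) = u (c + 1)) ∧ (∀ c, t.toFun (W c) = u (c + 2)) ∧
    ∀ w, (∀ c, w ≠ W c) → t.toFun w = s.toFun w

/-- `P` exhibits the closed triangle of edges determined by the clock-move
configuration `W` as separating: `P` is a two-coloring of the triangles which
changes value exactly across the three edges of the configuration, the white
triangles `W c` being on the `P`-side. -/
def ConfigCut (W : Fin 3 → T.White) (P : T.White ⊕ T.Black → Prop) : Prop :=
  (∀ (w : T.White) (c : Fin 3), (∀ c₀, ¬ (w = W c₀ ∧ c = c₀)) →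
    (P (Sum.inl w) ↔ P (Sum.inr (T.wadj w c)))) ∧
  (∀ c, P (Sum.inl (W c))) ∧ (∀ c, ¬ P (Sum.inr (T.wadj (W c) c)))

/-- A trinity is irreducible if it is not the trinity `F` with a single black
and a single white triangle, and it is not a nontrivial connected sum; i.e.
every separating closed triangle of edges cuts off a single triangle. -/
def Irreducible : Prop :=
  1 < Fintype.card T.White ∧
  ∀ (W : Fin 3 → T.White) (u : Fin 3 → T.Vertex) (P : T.White ⊕ T.Black → Prop),
    T.CombConfig W u → T.ConfigCut W P →
      (∃ b : T.Black, ∀ x, ¬ P x ↔ x = Sum.inr b) ∨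
      (∃ w : T.White, ∀ x, P x ↔ x = Sum.inl w)

/-! ### The directed dual graphs `G_X^*`

For a color `X`, the vertices of the directed graph `G_X^*` are the vertices of
the trinity of color `X` and its directed edges are in natural bijection with
the white triangles: the white triangle `w` corresponds to the dual edge of its
edge of color `X`, directed from the vertex of color `X` of the adjacent black
triangle `wadj w X` (its tail) to the vertex of color `X` of `w` (its head).
The arrows of a state pointing to vertices of color `X` are edges of `G_X^*`. -/

/-- The head of the edge of `G_X^*` corresponding to the white triangle `w`. -/
def head (X : Fin 3) (w : T.White) : T.Vertex := T.wvert w X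

/-- The tail of the edge of `G_X^*` corresponding to the white triangle `w`. -/
def tail (X : Fin 3) (w : T.White) : T.Vertex := T.bvert (T.wadj w X) X

/-- One-step reachability in `G_X^*` along edges from the set `A`. -/
def ARel (X : Fin 3) (A : Finset T.White) (a b : T.Vertex) : Prop :=
  ∃ w ∈ A, T.tail X w = a ∧ T.head X w = b

/-- `A` is a spanning arborescence of `G_X^*`, rooted at the root of color `X`
(the vertex of color `X` of the outer triangle `o`): a spanning tree all of
whose edges point away from the root. -/
def IsArborescence (X : Fin 3) (o : T.White) (A : Finset T.White) : Prop :=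
  (∀ w ∈ A, T.head X w ≠ T.wvert o X) ∧
  (∀ v : T.Vertex, T.vcol v = X → v ≠ T.wvert o X → ∃! w, w ∈ A ∧ T.head X w = v) ∧
  (∀ v : T.Vertex, T.vcol v = X → Relation.ReflTransGen (T.ARel X A) (T.wvert o X) v)

/-- One step of the tour tracing (counter-clockwise) the boundary of a small
neighborhood of the spanning tree `A` in `G_X^*`.  A position of the tour is a
dart `(w, d)`: the edge `w` of `G_X^*` together with a direction (`true`:
towards the head, `false`: towards the tail).  From the end of the dart one
rotates to the next edge-end around the vertex; if that edge belongs to `A` it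
is traversed away from the vertex, and otherwise its end is crossed (recorded
by bouncing back towards the vertex). -/
def tourStep (X : Fin 3) (A : Finset T.White) : T.White × Bool → T.White × Bool :=
  fun p =>
    if p.2 then
      let w' := T.badj (T.wadj p.1 (X + 1)) X
      (w', decide (w' ∈ A))
    else
      let w' := T.badj (T.wadj p.1 X) (X + 2)
      (w', decide (w' ∉ A))

/-- The position of the edge `w` of `G_X^*` in the ordering `<_A` determined by
the spanning arborescence `A`: the first time the boundary tour of a
neighborhood of `A` (started on the outer white triangle `o`, i.e. at the dart
arriving at the root through `o`) travels along `w` (if `w ∈ A`) or crosses an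
end of `w` (if `w ∉ A`). -/
noncomputable def ordIdx (X : Fin 3) (o : T.White) (A : Finset T.White) (w : T.White) : ℕ :=
  sInf {k : ℕ | ((T.tourStep X A)^[k] (o, true)).1 = w}

/-- `A` is the clocked arborescence of `G_X^*`: the spanning arborescence such
that for every non-root vertex `y` of color `X`, the edge of `A` pointing to
`y` is smallest, with respect to the ordering `<_A`, among all edges of
`G_X^*` terminating at `y`. -/
def IsClocked (X : Fin 3) (o : T.White) (A : Finset T.White) : Prop :=
  T.IsArborescence X o A ∧
    ∀ w ∈ A, ∀ w' : T.White, w' ≠ w → T.head X w' = T.head X w →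
      T.ordIdx X o A w < T.ordIdx X o A w'

/-! ### Wreaths (toric trinities) -/

/-- A nonempty set `C` of edges of `G_R^*` forming a single (directed) cycle:
at every red vertex the in-degree and out-degree in `C` agree and are at most
one, and `C` is connected. -/
def IsDirCycle (C : Finset T.White) : Prop :=
  C.Nonempty ∧
  (∀ v : T.Vertex, T.vcol v = 0 →
    (C.filter fun w => T.head 0 w = v).card = (C.filter fun w => T.tail 0 w = v).card ∧
    (C.filter fun w => T.head 0 w = v).card ≤ 1) ∧
  ∀ w ∈ C, ∀ w' ∈ C,
    Relation.ReflTransGen (fun a b => a ∈ C ∧ b ∈ C ∧ T.head 0 a = T.tail 0 b) w w'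

/-- The cycle `C` of edges of `G_R^*` separates the surface: the faces of
`G_R^*` (which correspond to the green and blue vertices of the trinity) can be
two-colored so that the two faces adjacent along an edge of `G_R^*` (namely the
faces of the green and the blue endpoint of the crossed red edge) get the same
color exactly when the edge does not belong to `C`. -/
def SeparatingSet (C : Finset T.White) : Prop :=
  ∃ P : T.Vertex → Prop,
    (∀ w : T.White, w ∉ C → (P (T.wvert w 1) ↔ P (T.wvert w 2))) ∧
    ∀ w ∈ C, ¬ (P (T.wvert w 1) ↔ P (T.wvert w 2))

/-- A wreath: a set `W` of edges of the directed dual graph `G_R^*` such that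
every red vertex has exactly one edge of `W` pointing to it and the edges of
`W` form no separating cycle. -/
def IsWreath (W : Finset T.White) : Prop :=
  (∀ v : T.Vertex, T.vcol v = 0 → ∃! w, w ∈ W ∧ T.head 0 w = v) ∧
  ∀ C ⊆ W, T.IsDirCycle C → ¬ T.SeparatingSet C

end Trinity

/-!
Every white triangle contributes to the state chain of a Tutte matching its two edges at its
matched vertex, oriented towards that vertex. A clockwise move about a configuration `(W, u)`
changes the state chain by `3 ∂D - ∂E`, where `E` is the sum of the three white triangles `W c`
and `D` is a 2-chain bounded by the closed triangle of edges of the configuration, normalized to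
vanish on the outer triangle; `D` exists since a planar trinity has `H₁ = 0`.

The heart of the argument is `D ≤ 0`. Otherwise, at a positive maximum `M` of `D`, the faces with
`D < M` form a proper subcomplex containing the outer triangle but none of the corners `W c`, and
Euler's inequality for it leaves fewer vertices than the matching of its white triangles and of
the corners requires. So `3D - E` is nonpositive, and somewhere negative, on black triangles.
Along a cycle of clockwise moves these 2-chains add up to a 2-cycle, which must be constant; but it
vanishes on the outer triangle and is negative on some black triangle.
-/

section LinearAlgebra

open Module

variable {K M N ι : Type*} [Field K] [AddCommGroup M] [Module K M] [AddCommGroup N] [Module K N]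

theorem finrank_add_finrank_map_le [FiniteDimensional K M] {B C : Submodule K M} (d : M →ₗ[K] N)
    (hBC : B ≤ C) (hB : B ≤ LinearMap.ker d) :
    finrank K B + finrank K (C.map d) ≤ finrank K C := by
  have hker : B.comap C.subtype ≤ LinearMap.ker (d.domRestrict C) := by
    rw [LinearMap.ker_domRestrict]
    exact Submodule.comap_mono hB
  have hrank := (d.domRestrict C).finrank_range_add_finrank_ker
  rw [LinearMap.range_domRestrict] at hrank
  have hmono := Submodule.finrank_mono hker
  rw [(Submodule.comapSubtypeEquivOfLe hBC).finrank_eq] at hmono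
  omega

variable (K) in
abbrev supportedOn (s : Finset ι) : Submodule K (ι → K) := Submodule.pi (↑s)ᶜ fun _ => ⊥

theorem mem_supportedOn {s : Finset ι} {x : ι → K} : x ∈ supportedOn K s ↔ ∀ i ∉ s, x i = 0 := by
  simp [Submodule.mem_pi]

variable [DecidableEq ι]

theorem linearIndependent_single_one_subtype (s : Finset ι) :
    LinearIndependent K fun x : s => (Pi.single x.1 1 : ι → K) :=
  (Pi.linearIndependent_single_one ι K).comp _ Subtype.val_injective

variable [Fintype ι]

theorem card_le_finrank_add_one (Q : Submodule K (ι → K)) (S : Finset ι)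
    (hS : ∀ x ∈ S, ∀ y ∈ S, Pi.single x 1 - Pi.single y 1 ∈ Q) :
    S.card ≤ finrank K Q + 1 := by
  obtain rfl | ⟨x₀, hx₀⟩ := S.eq_empty_or_nonempty
  · simp
  have hspan : Submodule.span K (Set.range fun x : S => (Pi.single x.1 1 : ι → K)) ≤
      Q ⊔ (K ∙ Pi.single x₀ 1) := by
    rw [Submodule.span_le, Set.range_subset_iff]
    intro x
    rw [← sub_add_cancel (Pi.single x.1 1 : ι → K) (Pi.single x₀ 1)]
    exact Submodule.add_mem_sup (hS x x.2 x₀ hx₀) (Submodule.mem_span_singleton_self _)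
  calc S.card
        = finrank K (Submodule.span K (Set.range fun x : S => (Pi.single x.1 1 : ι → K))) := by
        rw [finrank_span_eq_card (linearIndependent_single_one_subtype S), Fintype.card_coe]
    _ ≤ finrank K ↥(Q ⊔ (K ∙ Pi.single x₀ 1)) := Submodule.finrank_mono hspan
    _ ≤ finrank K Q + finrank K (K ∙ (Pi.single x₀ 1 : ι → K)) :=
        Submodule.finrank_add_le_finrank_add_finrank _ _
    _ ≤ finrank K Q + 1 := by
        grw [finrank_span_singleton (Pi.single_ne_zero_iff.mpr one_ne_zero)]

theorem finrank_supportedOn (s : Finset ι) : finrank K (supportedOn K s) = s.card := by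
  apply le_antisymm
  · have hinj : Function.Injective
        ((LinearMap.funLeft K K (Subtype.val : s → ι)).comp (supportedOn K s).subtype) := by
      intro x y hxy
      ext i
      by_cases hi : i ∈ s
      · exact congrFun hxy ⟨i, hi⟩
      · rw [mem_supportedOn.mp x.2 i hi, mem_supportedOn.mp y.2 i hi]
    simpa using LinearMap.finrank_le_finrank_of_injective hinj
  · have hspan : Submodule.span K (Set.range fun x : s => (Pi.single x.1 1 : ι → K)) ≤
        supportedOn K s := by
      rw [Submodule.span_le, Set.range_subset_iff]
      intro x
      refine mem_supportedOn.mpr fun i hi => Pi.single_eq_of_ne ?_ _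
      rintro rfl
      exact hi x.2
    simpa [finrank_span_eq_card (linearIndependent_single_one_subtype s)] using
      Submodule.finrank_mono hspan

end LinearAlgebra

namespace Trinity

variable {T : Trinity}

section ChainComplex

abbrev Face (T : Trinity) := T.White ⊕ T.Black

/-- The edge `(w, c)` is the edge of color `c` of the white triangle `w`, oriented from its vertex
of color `c + 1` to its vertex of color `c + 2`; every edge borders exactly one white triangle. -/
abbrev Edge (T : Trinity) := T.White × Fin 3

def faceVert : T.Face → Fin 3 → T.Vertex
  | .inl w => T.wvert w
  | .inr b => T.bvert b

def faceEdge : T.Face → Fin 3 → T.Edge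
  | .inl w, c => (w, c)
  | .inr b, c => (T.badj b c, c)

def blackEdgeEquiv (T : Trinity) : T.Black × Fin 3 ≃ T.Edge where
  toFun p := (T.badj p.1 p.2, p.2)
  invFun e := (T.wadj e.1 e.2, e.2)
  left_inv p := by simp [T.wadj_badj]
  right_inv e := by simp [T.badj_wadj]

lemma bvert_badj (b : T.Black) {c x : Fin 3} (h : x ≠ c) :
    T.bvert b x = T.wvert (T.badj b c) x := by
  simpa [T.wadj_badj] using T.bvert_wadj (T.badj b c) c x h

lemma faceVert_inl_eq_inr (w : T.White) {c x : Fin 3} (h : x ≠ c) :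
    faceVert (.inl w) x = faceVert (.inr (T.wadj w c)) x :=
  (T.bvert_wadj w c x h).symm

lemma fin3_add_one_ne_self : ∀ c : Fin 3, c + 1 ≠ c := by decide

lemma fin3_add_two_ne_self : ∀ c : Fin 3, c + 2 ≠ c := by decide

lemma fin3_const_of_step {β : Sort*} (x : Fin 3 → β) (h : ∀ c, x (c + 1) = x (c + 2))
    (i j : Fin 3) : x i = x j := by
  have to_zero : ∀ i, x i = x 0 := by
    intro i
    fin_cases i
    · rfl
    · exact (h 0).trans (h 1)
    · exact h 1
  rw [to_zero i, to_zero j]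

def edgeBoundary (e : T.Edge) : T.Vertex → ℚ :=
  Pi.single (T.wvert e.1 (e.2 + 1)) 1 - Pi.single (T.wvert e.1 (e.2 + 2)) 1

lemma edgeBoundary_faceEdge (f : T.Face) (c : Fin 3) :
    edgeBoundary (faceEdge f c) =
      Pi.single (faceVert f (c + 1)) 1 - Pi.single (faceVert f (c + 2)) 1 := by
  cases f with
  | inl w => rfl
  | inr b =>
    simp only [edgeBoundary, faceEdge, faceVert, bvert_badj b (fin3_add_one_ne_self c),
      bvert_badj b (fin3_add_two_ne_self c)]

lemma sum_fin3_single_sub_single {V : Type*} [DecidableEq V] (x : Fin 3 → V) :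
    ∑ c : Fin 3, (Pi.single (x (c + 1)) 1 - Pi.single (x (c + 2)) 1 : V → ℚ) = 0 := by
  simp [Fin.sum_univ_three]
  abel

lemma sum_edgeBoundary_faceEdge (f : T.Face) : ∑ c, edgeBoundary (faceEdge f c) = 0 := by
  simp only [edgeBoundary_faceEdge, sum_fin3_single_sub_single]

def bd₂ (T : Trinity) : (T.Face → ℚ) →ₗ[ℚ] (T.Edge → ℚ) :=
  LinearMap.pi fun e => LinearMap.proj (.inl e.1) - LinearMap.proj (.inr (T.wadj e.1 e.2))

@[simp] lemma bd₂_apply (a : T.Face → ℚ) (e : T.Edge) :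
    T.bd₂ a e = a (.inl e.1) - a (.inr (T.wadj e.1 e.2)) := rfl

def bd₁ (T : Trinity) : (T.Edge → ℚ) →ₗ[ℚ] (T.Vertex → ℚ) :=
  Fintype.linearCombination ℚ edgeBoundary

lemma bd₁_single (e : T.Edge) : T.bd₁ (Pi.single e 1) = edgeBoundary e := by
  simp [bd₁, Fintype.linearCombination_apply_single]

lemma bd₁_bd₂ (a : T.Face → ℚ) : T.bd₁ (T.bd₂ a) = 0 := by
  have hwhite : ∑ e : T.Edge, a (.inl e.1) • edgeBoundary e = 0 := by
    rw [Fintype.sum_prod_type]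
    refine Finset.sum_eq_zero fun w _ => ?_
    dsimp only
    rw [← Finset.smul_sum,
      show ∑ c, edgeBoundary (w, c) = 0 from sum_edgeBoundary_faceEdge (.inl w), smul_zero]
  have hblack : ∑ e : T.Edge, a (.inr (T.wadj e.1 e.2)) • edgeBoundary e = 0 := by
    rw [← (blackEdgeEquiv T).sum_comp, Fintype.sum_prod_type]
    refine Finset.sum_eq_zero fun b _ => ?_
    simp only [blackEdgeEquiv, Equiv.coe_fn_mk, T.wadj_badj]
    rw [← Finset.smul_sum,
      show ∑ c, edgeBoundary (T.badj b c, c) = 0 from sum_edgeBoundary_faceEdge (.inr b), smul_zero]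
  simp [bd₁, Fintype.linearCombination_apply, sub_smul, hwhite, hblack]

lemma Surface.eq_of_forall_wadj (hS : T.Surface) {β : Sort*} {g : T.Face → β}
    (hg : ∀ w c, g (.inl w) = g (.inr (T.wadj w c))) (f f' : T.Face) : g f = g f' := by
  have hwhite : ∀ w w', g (.inl w) = g (.inl w') := fun w w' => by
    induction hS.1 w w' with
    | refl => rfl
    | tail _ hadj ih =>
      obtain ⟨c, c', h⟩ := hadj
      rw [ih, hg _ c, h, ← hg]
  have hface : ∀ f, ∃ w, g f = g (.inl w)
    | .inl w => ⟨w, rfl⟩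
    | .inr b => ⟨T.badj b 0, by rw [hg _ 0, T.wadj_badj]⟩
  obtain ⟨w, hw⟩ := hface f
  obtain ⟨w', hw'⟩ := hface f'
  rw [hw, hw', hwhite]

lemma Surface.eq_of_bd₂_eq_zero (hS : T.Surface) {a : T.Face → ℚ} (ha : T.bd₂ a = 0)
    (f f' : T.Face) : a f = a f' :=
  hS.eq_of_forall_wadj (fun w c => sub_eq_zero.mp (congrFun ha (w, c))) f f'

end ChainComplex

section Homology

open Module Submodule

/-- The class of `x` modulo boundaries of 1-chains carried by `E`: vertices joined by a path of
edges of `E` have the same class. -/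
def vertexClass (E : Set T.Edge) (x : T.Vertex) :
    (T.Vertex → ℚ) ⧸ span ℚ (edgeBoundary '' E) :=
  Submodule.Quotient.mk (Pi.single x 1)

lemma vertexClass_eq_iff {E : Set T.Edge} {x y : T.Vertex} :
    vertexClass E x = vertexClass E y ↔
      Pi.single x 1 - Pi.single y 1 ∈ span ℚ (edgeBoundary '' E) :=
  Submodule.Quotient.eq _

lemma vertexClass_faceVert {E : Set T.Edge} {f : T.Face} (hf : ∀ c, faceEdge f c ∈ E)
    (i j : Fin 3) : vertexClass E (faceVert f i) = vertexClass E (faceVert f j) :=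
  fin3_const_of_step (vertexClass E ∘ faceVert f)
    (fun c => vertexClass_eq_iff.mpr (subset_span ⟨_, hf c, edgeBoundary_faceEdge f c⟩)) i j

lemma vertexClass_univ_eq (hS : T.Surface) (hV : ∀ v, ∃ w c, T.wvert w c = v) (x y : T.Vertex) :
    vertexClass Set.univ x = vertexClass Set.univ y := by
  have hall : ∀ (f : T.Face) c, faceEdge f c ∈ Set.univ := fun _ _ => Set.mem_univ _
  have hconst := hS.eq_of_forall_wadj (g := fun f => vertexClass Set.univ (faceVert f 0))
    fun w c => by
      rw [vertexClass_faceVert (hall (.inl w)) 0 (c + 1),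
        faceVert_inl_eq_inr w (fin3_add_one_ne_self c), vertexClass_faceVert (hall _) (c + 1) 0]
  obtain ⟨w, c, rfl⟩ := hV x
  obtain ⟨w', c', rfl⟩ := hV y
  exact (vertexClass_faceVert (hall (.inl w)) c 0).trans
    ((hconst _ _).trans (vertexClass_faceVert (hall (.inl w')) 0 c'))

lemma finrank_map_bd₂_supportedOn (hS : T.Surface) {R : Finset T.Face} {f₀ : T.Face}
    (hf₀ : f₀ ∉ R) : finrank ℚ ((supportedOn ℚ R).map T.bd₂) = R.card := by
  rw [← LinearMap.range_domRestrict, LinearMap.finrank_range_of_inj, finrank_supportedOn]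
  rw [LinearMap.injective_domRestrict_iff, disjoint_iff_inf_le]
  rintro a ⟨haR, ha⟩
  have hzero := mem_supportedOn.mp haR f₀ hf₀
  exact (Submodule.mem_bot ℚ).mpr (funext fun f => (hS.eq_of_bd₂_eq_zero ha f f₀).trans hzero)

/-- Euler's inequality for the subcomplex spanned by a proper set `R` of faces. -/
theorem Surface.card_vertices_add_card_faces_le (hS : T.Surface) {R : Finset T.Face}
    {f₀ : T.Face} (hf₀ : f₀ ∉ R) {E : Finset T.Edge} (hRE : ∀ f ∈ R, ∀ c, faceEdge f c ∈ E)
    {V : Finset T.Vertex} (hV : ∀ x ∈ V, ∀ y ∈ V, vertexClass ↑E x = vertexClass ↑E y) :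
    V.card + R.card ≤ E.card + 1 := by
  have hBE : (supportedOn ℚ R).map T.bd₂ ≤ supportedOn ℚ E := by
    rintro _ ⟨a, ha, rfl⟩
    refine mem_supportedOn.mpr fun ⟨w, c⟩ he => ?_
    have hw : Sum.inl w ∉ R := fun h => he (hRE _ h c)
    have hb : Sum.inr (T.wadj w c) ∉ R := fun h =>
      he (by simpa [faceEdge, T.badj_wadj] using hRE _ h c)
    simp [mem_supportedOn.mp ha _ hw, mem_supportedOn.mp ha _ hb]
  have hBker : (supportedOn ℚ R).map T.bd₂ ≤ LinearMap.ker T.bd₁ := by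
    rintro _ ⟨a, -, rfl⟩
    exact bd₁_bd₂ a
  have hspan : span ℚ (edgeBoundary '' ↑E) ≤ (supportedOn ℚ E).map T.bd₁ := by
    rw [span_le]
    rintro _ ⟨e, he, rfl⟩
    refine ⟨Pi.single e 1, mem_supportedOn.mpr fun e' he' => ?_, bd₁_single e⟩
    exact Pi.single_eq_of_ne (by rintro rfl; exact he' he) _
  have hVcard :=
    card_le_finrank_add_one _ V fun x hx y hy => vertexClass_eq_iff.mp (hV x hx y hy)
  have hrank := finrank_add_finrank_map_le T.bd₁ hBE hBker
  rw [finrank_map_bd₂_supportedOn hS hf₀, finrank_supportedOn] at hrank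
  have := Submodule.finrank_mono hspan
  omega

lemma card_black (T : Trinity) : Fintype.card T.Black = Fintype.card T.White :=
  Fintype.card_congr
    ⟨fun b => T.badj b 0, fun w => T.wadj w 0, (T.wadj_badj · 0), (T.badj_wadj · 0)⟩

/-- On a sphere (Euler characteristic `2`) every 1-cycle bounds. -/
theorem Surface.ker_bd₁_le_range_bd₂ (hS : T.Surface)
    (hcard : Fintype.card T.Vertex = Fintype.card T.White + 2)
    (hV : ∀ v, ∃ w c, T.wvert w c = v) : LinearMap.ker T.bd₁ ≤ LinearMap.range T.bd₂ := by
  have : Nonempty T.Vertex := Fintype.card_pos_iff.mp (by omega)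
  obtain ⟨w₀, -⟩ := hV (Classical.arbitrary _)
  have hfaces : Fintype.card T.Face = 2 * Fintype.card T.White := by
    rw [Fintype.card_sum, card_black]; ring
  have hrange2 : Fintype.card T.Face - 1 ≤ finrank ℚ (LinearMap.range T.bd₂) := by
    have h := finrank_map_bd₂_supportedOn hS (Finset.notMem_erase (Sum.inl w₀) Finset.univ)
    rw [Finset.card_erase_of_mem (Finset.mem_univ _), Finset.card_univ] at h
    exact h ▸ Submodule.finrank_mono LinearMap.map_le_range
  have hrange1 : Fintype.card T.Vertex ≤ finrank ℚ (LinearMap.range T.bd₁) + 1 := by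
    have hspan : span ℚ (edgeBoundary '' Set.univ) ≤ LinearMap.range T.bd₁ := by
      rw [span_le]
      rintro _ ⟨e, -, rfl⟩
      exact ⟨Pi.single e 1, bd₁_single e⟩
    simpa using card_le_finrank_add_one _ Finset.univ fun x _ y _ =>
      hspan (vertexClass_eq_iff.mp (vertexClass_univ_eq hS hV x y))
  have hrank := T.bd₁.finrank_range_add_finrank_ker
  rw [finrank_fintype_fun_eq_card, Fintype.card_prod, Fintype.card_fin] at hrank
  refine (Submodule.eq_of_le_of_finrank_le (LinearMap.range_le_ker_iff.mpr ?_) ?_).ge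
  · exact LinearMap.ext bd₁_bd₂
  · omega

end Homology

section Configurations

namespace State

lemma toFun_injective (s : T.State) : Function.Injective s.toFun := by
  have root_of_outer : ∀ w, T.IsOuter w → T.IsRoot (s.toFun w) :=
    fun w hw => ⟨w, hw, 0, s.outer_spec w hw⟩
  intro w w' h
  by_cases hw : T.IsOuter w <;> by_cases hw' : T.IsOuter w'
  · exact Option.some_injective _ (hw.symm.trans hw')
  · exact absurd (h ▸ root_of_outer w hw) (s.not_root w' hw')
  · exact absurd (h ▸ root_of_outer w' hw') (s.not_root w hw)
  · exact s.injOn w w' hw hw' h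

lemma exists_wvert_eq (s : T.State) (v : T.Vertex) : ∃ w c, T.wvert w c = v := by
  by_cases hv : T.IsRoot v
  · obtain ⟨w, -, c, rfl⟩ := hv
    exact ⟨w, c, rfl⟩
  · obtain ⟨w, -, rfl⟩ := s.surj v hv
    obtain ⟨c, hc⟩ := s.incident w
    exact ⟨w, c, hc.symm⟩

lemma toFun_ne_wvert_outer (s : T.State) {o : T.White} (ho : T.IsOuter o) (w : T.White)
    {c : Fin 3} (hc : c ≠ 0) : s.toFun w ≠ T.wvert o c := by
  intro h
  by_cases hw : T.IsOuter w
  · obtain rfl : w = o := Option.some_injective _ (hw.symm.trans ho)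
    rw [s.outer_spec w hw] at h
    exact hc (by simpa [T.wvert_col] using congrArg T.vcol h.symm)
  · exact s.not_root w hw ⟨o, ho, c, h⟩

end State

variable {W : Fin 3 → T.White} {u : Fin 3 → T.Vertex}

lemma CombConfig.vcol_eq (hconf : T.CombConfig W u) (c : Fin 3) : T.vcol (u c) = c := by
  rw [← hconf (c + 1) c (fin3_add_one_ne_self c).symm, T.wvert_col]

lemma CombConfig.faceVert_wadj (hconf : T.CombConfig W u) {c x : Fin 3} (h : x ≠ c) :
    faceVert (.inr (T.wadj (W c) c)) x = u x :=
  (T.bvert_wadj (W c) c x h).trans (hconf c x h)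

lemma CombConfig.injective (hconf : T.CombConfig W u) {s : T.State}
    (hsW : ∀ c, s.toFun (W c) = u (c + 1)) : Function.Injective W := by
  intro c c' h
  simpa [hsW, hconf.vcol_eq] using congrArg (T.vcol ∘ s.toFun) h

def loop (W : Fin 3 → T.White) : T.Edge → ℚ := ∑ c, Pi.single (W c, c) 1

lemma loop_apply (W : Fin 3 → T.White) (w : T.White) (c : Fin 3) :
    loop W (w, c) = if w = W c then 1 else 0 := by
  simp only [loop, Finset.sum_apply, Pi.single_apply, Prod.ext_iff]
  rw [Finset.sum_eq_single c (fun c' _ hc' => if_neg fun h => hc' h.2.symm) (by simp)]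
  simp

lemma bd₁_loop (hconf : T.CombConfig W u) : T.bd₁ (loop W) = 0 := by
  have hbd : ∀ c, edgeBoundary (W c, c) = Pi.single (u (c + 1)) 1 - Pi.single (u (c + 2)) 1 :=
    fun c => by
      simp only [edgeBoundary, hconf c _ (fin3_add_one_ne_self c),
        hconf c _ (fin3_add_two_ne_self c)]
  simp only [loop, map_sum, bd₁_single, hbd, sum_fin3_single_sub_single]

theorem exists_bd₂_eq_loop (hpl : T.Planar) (s : T.State) (hconf : T.CombConfig W u)
    (o : T.White) : ∃ D : T.Face → ℚ, T.bd₂ D = loop W ∧ D (.inl o) = 0 := by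
  obtain ⟨D, hD⟩ := hpl.1.ker_bd₁_le_range_bd₂ hpl.2.2 s.exists_wvert_eq (bd₁_loop hconf)
  refine ⟨D - fun _ => D (.inl o), ?_, by simp⟩
  ext e
  simp [← hD]

variable {D : T.Face → ℚ}

lemma sub_eq_of_bd₂_eq_loop (hD : T.bd₂ D = loop W) (w : T.White) (c : Fin 3) :
    D (.inl w) - D (.inr (T.wadj w c)) = if w = W c then 1 else 0 := by
  simpa [loop_apply] using congrFun hD (w, c)

lemma le_of_bd₂_eq_loop (hD : T.bd₂ D = loop W) (w : T.White) (c : Fin 3) :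
    D (.inr (T.wadj w c)) ≤ D (.inl w) := by
  have := sub_eq_of_bd₂_eq_loop hD w c
  split_ifs at this <;> linarith

lemma eq_of_bd₂_eq_loop (hD : T.bd₂ D = loop W) {w : T.White} {c : Fin 3} (hw : w ≠ W c) :
    D (.inr (T.wadj w c)) = D (.inl w) := by
  have := sub_eq_of_bd₂_eq_loop hD w c
  rw [if_neg hw] at this
  linarith

lemma corner_sub_wadj_corner (hD : T.bd₂ D = loop W) (c : Fin 3) :
    D (.inl (W c)) - D (.inr (T.wadj (W c) c)) = 1 := by
  simpa using sub_eq_of_bd₂_eq_loop hD (W c) c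

end Configurations

section LevelSets

open Finset

lemma card_filter_edge_white (P : T.White → Prop) [DecidablePred P] :
    #(univ.filter fun e : T.Edge => P e.1) = 3 * #(univ.filter P) := by
  simp only [← Fintype.card_subtype]
  rw [Fintype.card_congr Equiv.prodSubtypeFstEquivSubtypeProd, Fintype.card_prod,
    Fintype.card_fin, mul_comm]

lemma card_filter_edge_black (P : T.Black → Prop) [DecidablePred P] :
    #(univ.filter fun e : T.Edge => P (T.wadj e.1 e.2)) = 3 * #(univ.filter P) := by
  simp only [← Fintype.card_subtype]
  rw [Fintype.card_congr ((blackEdgeEquiv T).symm.subtypeEquiv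
      (p := fun e : T.Edge => P (T.wadj e.1 e.2)) (q := fun p => P p.1) fun _ => Iff.rfl),
    Fintype.card_congr Equiv.prodSubtypeFstEquivSubtypeProd, Fintype.card_prod,
    Fintype.card_fin, mul_comm]

variable {W : Fin 3 → T.White} {u : Fin 3 → T.Vertex} {D : T.Face → ℚ} {M : ℚ}

variable (D M) in
def levelEdges : Finset T.Edge := univ.filter fun e => D (.inr (T.wadj e.1 e.2)) < M

lemma faceEdge_mem_levelEdges (hD : T.bd₂ D = loop W) {f : T.Face} (hf : D f < M) (c : Fin 3) :
    faceEdge f c ∈ levelEdges D M := by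
  cases f with
  | inl w => simpa [levelEdges, faceEdge] using (le_of_bd₂_eq_loop hD w c).trans_lt hf
  | inr b => simpa [levelEdges, faceEdge, T.wadj_badj] using hf

lemma card_levelEdges (hD : T.bd₂ D = loop W) (hM : ∀ f, D f ≤ M) :
    #(levelEdges D M) = #(univ.filter fun e : T.Edge => D (.inl e.1) < M) +
      #(univ.filter fun c => D (.inl (W c)) = M) := by
  rw [← card_filter_add_card_filter_not (s := levelEdges D M) fun e : T.Edge => D (.inl e.1) < M]
  congr 1
  · rw [levelEdges, filter_filter]
    exact congrArg card (filter_congr fun e _ =>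
      and_iff_right_of_imp ((le_of_bd₂_eq_loop hD e.1 e.2).trans_lt))
  · have loop_edge : ∀ e ∈ (levelEdges D M).filter fun e => ¬ D (.inl e.1) < M,
        e.1 = W e.2 ∧ D (.inl e.1) = M := by
      rintro ⟨w, c⟩ he
      simp only [levelEdges, mem_filter, mem_univ, true_and, not_lt] at he
      have hw : w = W c := by
        by_contra hw
        linarith [eq_of_bd₂_eq_loop hD hw]
      exact ⟨hw, le_antisymm (hM _) he.2⟩
    refine card_nbij' Prod.snd (fun c => (W c, c)) (fun e he => ?_) (fun c hc => ?_)
      (fun e he => ?_) (fun _ _ => rfl)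
    · simpa [← (loop_edge e he).1] using (loop_edge e he).2
    · simp only [coe_filter, mem_univ, true_and, Set.mem_ofPred_eq] at hc
      simp [levelEdges, hc]
      linarith [corner_sub_wadj_corner hD c]
    · exact Prod.ext (loop_edge e he).1.symm rfl

lemma corner_eq_max (hS : T.Surface) (hD : T.bd₂ D = loop W) (hM : ∀ f, D f ≤ M)
    {f₁ f₂ : T.Face} (h₁ : D f₁ < M) (h₂ : ¬ D f₂ < M) (c : Fin 3) : D (.inl (W c)) = M := by
  have hcount := card_levelEdges hD hM
  rw [levelEdges, card_filter_edge_black (fun b => D (.inr b) < M),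
    card_filter_edge_white (fun w => D (.inl w) < M)] at hcount
  have hJ : #(univ.filter fun c => D (.inl (W c)) = M) ≤ 3 := (card_filter_le _ _).trans (by simp)
  -- three edges per black triangle below `M` against three per white one plus one per corner at `M`
  rcases (by omega : #(univ.filter fun c => D (.inl (W c)) = M) = 0 ∨
      #(univ.filter fun c => D (.inl (W c)) = M) = 3) with hJ | hJ
  · have hlt : ∀ c, D (.inl (W c)) < M := fun c => (hM _).lt_of_ne fun h =>
      filter_eq_empty_iff.mp (card_eq_zero.mp hJ) (mem_univ c) h
    -- with no corner at level `M`, no edge separates `D < M` from `D = M`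
    have hconst := hS.eq_of_forall_wadj (g := fun f => D f < M) (fun w c => by
      by_cases hw : w = W c
      · subst hw
        exact propext ⟨fun _ => (le_of_bd₂_eq_loop hD _ c).trans_lt (hlt c), fun _ => hlt c⟩
      · rw [eq_of_bd₂_eq_loop hD hw]) f₁ f₂
    exact absurd (hconst ▸ h₁) h₂
  · exact card_filter_eq_iff.mp (hJ.trans (by simp)) c (mem_univ c)

lemma wadj_corner_lt (hD : T.bd₂ D = loop W) (hWM : ∀ c, D (.inl (W c)) = M) (c : Fin 3) :
    D (.inr (T.wadj (W c) c)) < M := by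
  linarith [corner_sub_wadj_corner hD c, hWM c]

lemma vertexClass_levelEdges (hS : T.Surface) (hconf : T.CombConfig W u)
    (hD : T.bd₂ D = loop W) (hWM : ∀ c, D (.inl (W c)) = M) {f₂ : T.Face} (h₂ : ¬ D f₂ < M)
    {f : T.Face} (hf : D f < M) (i : Fin 3) :
    vertexClass ↑(levelEdges D M) (faceVert f i) = vertexClass ↑(levelEdges D M) (u 0) := by
  set E : Set T.Edge := ↑(levelEdges D M)
  have hu : ∀ c, vertexClass E (u c) = vertexClass E (u 0) := by
    refine fun c' => fin3_const_of_step (vertexClass E ∘ u) (fun c => ?_) c' 0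
    simp only [Function.comp_apply]
    rw [← hconf c _ (fin3_add_one_ne_self c), ← hconf c _ (fin3_add_two_ne_self c)]
    exact vertexClass_eq_iff.mpr (Submodule.subset_span
      ⟨(W c, c), by simpa [E, levelEdges] using wadj_corner_lt hD hWM c, rfl⟩)
  have hedges : ∀ {f : T.Face}, D f < M → ∀ c, faceEdge f c ∈ E :=
    fun hf c => faceEdge_mem_levelEdges hD hf c
  let g : T.Face → _ := fun f =>
    if D f < M then vertexClass E (faceVert f 0) else vertexClass E (u 0)
  have hg : ∀ w c, g (.inl w) = g (.inr (T.wadj w c)) := by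
    intro w c
    by_cases hw : D (.inl w) < M
    · have hb := (le_of_bd₂_eq_loop hD w c).trans_lt hw
      simp only [g, if_pos hw, if_pos hb]
      rw [vertexClass_faceVert (hedges hw) 0 (c + 1),
        faceVert_inl_eq_inr w (fin3_add_one_ne_self c), vertexClass_faceVert (hedges hb) (c + 1) 0]
    by_cases hb : D (.inr (T.wadj w c)) < M
    · obtain rfl : w = W c := by
        by_contra hne
        rw [eq_of_bd₂_eq_loop hD hne] at hb
        exact hw hb
      simp only [g, if_neg hw, if_pos hb]
      rw [vertexClass_faceVert (hedges hb) 0 (c + 1), hconf.faceVert_wadj (fin3_add_one_ne_self c),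
        hu (c + 1)]
    · simp only [g, if_neg hw, if_neg hb]
  have := hS.eq_of_forall_wadj hg f f₂
  simp only [g, if_pos hf, if_neg h₂] at this
  rw [vertexClass_faceVert (hedges hf) i 0, this]

variable (D M) in
def levelVerts : Finset T.Vertex := univ.filter fun v => ∃ f, D f < M ∧ ∃ i, faceVert f i = v

/-- The vertices matched with the white triangles below level `M` and with the corners, and an
unmatched root. -/
lemma card_le_card_levelVerts (s : T.State) (hconf : T.CombConfig W u)
    (hsW : ∀ c, s.toFun (W c) = u (c + 1)) (hD : T.bd₂ D = loop W)
    (hWM : ∀ c, D (.inl (W c)) = M) {o : T.White} (ho : T.IsOuter o) (hoM : D (.inl o) < M) :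
    #(univ.filter fun w => D (.inl w) < M) + 4 ≤ #(levelVerts D M) := by
  set X := (univ.filter fun w => D (.inl w) < M) ∪ univ.image W
  have hX : #X = #(univ.filter fun w => D (.inl w) < M) + 3 := by
    rw [card_union_of_disjoint, card_image_of_injective _ (hconf.injective hsW), card_univ,
      Fintype.card_fin]
    rw [disjoint_left]
    intro w hw hw'
    obtain ⟨c, -, rfl⟩ := mem_image.mp hw'
    simp [hWM] at hw
  have hnot : T.wvert o 1 ∉ X.image s.toFun := by
    simp only [mem_image, not_exists, not_and]
    exact fun w _ => s.toFun_ne_wvert_outer ho w one_ne_zero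
  have hsub : insert (T.wvert o 1) (X.image s.toFun) ⊆ levelVerts D M := by
    intro v hv
    simp only [levelVerts, mem_filter, mem_univ, true_and]
    rcases mem_insert.mp hv with rfl | hv
    · exact ⟨.inl o, hoM, 1, rfl⟩
    obtain ⟨w, hw, rfl⟩ := mem_image.mp hv
    rcases mem_union.mp hw with hw | hw
    · obtain ⟨c, hc⟩ := s.incident w
      exact ⟨.inl w, (mem_filter.mp hw).2, c, hc.symm⟩
    · obtain ⟨c, -, rfl⟩ := mem_image.mp hw
      exact ⟨.inr (T.wadj (W c) c), wadj_corner_lt hD hWM c, c + 1,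
        by rw [hconf.faceVert_wadj (fin3_add_one_ne_self c), hsW]⟩
  calc _ = #(insert (T.wvert o 1) (X.image s.toFun)) := by
        rw [card_insert_of_notMem hnot, card_image_of_injective _ s.toFun_injective, hX]
    _ ≤ _ := card_le_card hsub

theorem Surface.nonpos_of_bd₂_eq_loop (hS : T.Surface) (s : T.State) (hconf : T.CombConfig W u)
    (hsW : ∀ c, s.toFun (W c) = u (c + 1)) {o : T.White} (ho : T.IsOuter o)
    (hD : T.bd₂ D = loop W) (hDo : D (.inl o) = 0) (f : T.Face) : D f ≤ 0 := by
  by_contra! hf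
  obtain ⟨f₂, -, hmax⟩ := exists_max_image univ D ⟨f, mem_univ f⟩
  set M := D f₂
  have hM : ∀ f', D f' ≤ M := fun f' => hmax f' (mem_univ _)
  have hoM : D (.inl o) < M := hDo ▸ hf.trans_le (hM f)
  have h₂ : ¬ D f₂ < M := lt_irrefl M
  have hWM := corner_eq_max hS hD hM hoM h₂
  have hcount := card_levelEdges hD hM
  rw [filter_true_of_mem fun c _ => hWM c, card_univ, Fintype.card_fin, levelEdges,
    card_filter_edge_black (fun b => D (.inr b) < M),
    card_filter_edge_white (fun w => D (.inl w) < M)] at hcount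
  have hfaces : #(univ.filter fun f : T.Face => D f < M) =
      #(univ.filter fun w => D (.inl w) < M) + #(univ.filter fun b => D (.inr b) < M) := by
    simp only [card_filter, Fintype.sum_sum_type]
  have hlinked : ∀ x ∈ levelVerts D M,
      vertexClass ↑(levelEdges D M) x = vertexClass ↑(levelEdges D M) (u 0) := by
    intro x hx
    obtain ⟨f, hf, i, rfl⟩ := (mem_filter.mp hx).2
    exact vertexClass_levelEdges hS hconf hD hWM h₂ hf i
  have heuler := hS.card_vertices_add_card_faces_le (R := univ.filter fun f => D f < M)
    (f₀ := f₂) (by simp [h₂]) (fun f hf c => faceEdge_mem_levelEdges hD (mem_filter.mp hf).2 c)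
    (V := levelVerts D M) fun x hx y hy => (hlinked x hx).trans (hlinked y hy).symm
  have hverts := card_le_card_levelVerts s hconf hsW hD hWM ho hoM
  rw [levelEdges, card_filter_edge_black (fun b => D (.inr b) < M)] at heuler
  omega

end LevelSets

section Heights

/-- Each white triangle contributes its two edges at its matched vertex, oriented towards it. -/
def stateChain (x : T.State) : T.Edge → ℚ := fun e => ![0, 1, -1] (e.2 - T.vcol (x.toFun e.1))

def cornerChain (W : Fin 3 → T.White) : T.Face → ℚ :=
  Sum.elim (fun w => if w ∈ Set.range W then 1 else 0) 0

lemma fin3_weight_identity (a c : Fin 3) :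
    (![0, 1, -1] (c - (a + 2)) : ℚ) - ![0, 1, -1] (c - (a + 1)) =
      3 * (if a = c then 1 else 0) - 1 := by
  fin_cases a <;> fin_cases c <;> simp [Fin.ext_iff, Fin.sub_def] <;> norm_num

lemma stateChain_sub_stateChain {W : Fin 3 → T.White} {u : Fin 3 → T.Vertex}
    (hconf : T.CombConfig W u) {s t : T.State} (hsW : ∀ c, s.toFun (W c) = u (c + 1))
    (htW : ∀ c, t.toFun (W c) = u (c + 2)) (hfr : ∀ w, (∀ c, w ≠ W c) → t.toFun w = s.toFun w) :
    stateChain t - stateChain s = (3 : ℚ) • loop W - T.bd₂ (cornerChain W) := by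
  ext ⟨w, c⟩
  simp only [Pi.sub_apply, Pi.smul_apply, smul_eq_mul, stateChain, loop_apply, bd₂_apply,
    cornerChain, Sum.elim_inl, Sum.elim_inr, Pi.zero_apply, sub_zero]
  by_cases hw : w ∈ Set.range W
  · obtain ⟨a, rfl⟩ := hw
    simp only [hsW, htW, hconf.vcol_eq, if_pos (Set.mem_range_self a),
      (hconf.injective hsW).eq_iff, fin3_weight_identity]
  · have hfix := hfr w fun c h => hw ⟨c, h.symm⟩
    rw [hfix, if_neg hw, if_neg fun h => hw ⟨c, h.symm⟩]
    ring

/-- A height of a state is a 2-chain bounded by its state chain; `Z` is the change of height from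
`s` to `t`. -/
def HeightDrop (o : T.White) (s t : T.State) : Prop :=
  ∃ Z : T.Face → ℚ, T.bd₂ Z = stateChain t - stateChain s ∧ Z (.inl o) = 0 ∧
    (∀ b, Z (.inr b) ≤ 0) ∧ ∃ b, Z (.inr b) < 0

lemma HeightDrop.trans {o : T.White} {s t r : T.State} (h₁ : T.HeightDrop o s t)
    (h₂ : T.HeightDrop o t r) : T.HeightDrop o s r := by
  obtain ⟨Z₁, hbd₁, ho₁, hle₁, -⟩ := h₁
  obtain ⟨Z₂, hbd₂, ho₂, hle₂, b, hb⟩ := h₂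
  refine ⟨Z₁ + Z₂, by rw [map_add, hbd₁, hbd₂]; abel, by simp [ho₁, ho₂],
    fun b => add_nonpos (hle₁ b) (hle₂ b), b, add_neg_of_nonpos_of_neg (hle₁ b) hb⟩

lemma heightDrop_of_cwMove (hpl : T.Planar) {o : T.White} (ho : T.IsOuter o) {s t : T.State}
    (h : T.CWMove s t) : T.HeightDrop o s t := by
  obtain ⟨W, u, hconf, hnout, hsW, htW, hfr⟩ := h
  obtain ⟨D, hD, hDo⟩ := exists_bd₂_eq_loop hpl s hconf o
  have hDle := hpl.1.nonpos_of_bd₂_eq_loop s hconf hsW ho hD hDo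
  have ho' : ∀ c, W c ≠ o := fun c hc => hnout c (hc ▸ ho)
  refine ⟨(3 : ℚ) • D - cornerChain W, ?_, ?_, fun b => ?_, T.wadj (W 0) 0, ?_⟩
  · rw [map_sub, map_smul, hD, stateChain_sub_stateChain hconf hsW htW hfr]
  · simp [cornerChain, hDo, ho']
  · simpa [cornerChain] using mul_nonpos_of_nonneg_of_nonpos zero_le_three (hDle (.inr b))
  · simp only [Pi.sub_apply, Pi.smul_apply, smul_eq_mul, cornerChain, Sum.elim_inr, Pi.zero_apply]
    linarith [corner_sub_wadj_corner hD 0, hDle (.inl (W 0))]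

lemma not_heightDrop_self (hS : T.Surface) {o : T.White} {s : T.State} :
    ¬ T.HeightDrop o s s := by
  rintro ⟨Z, hZ, hZo, -, b, hb⟩
  rw [sub_self] at hZ
  linarith [hS.eq_of_bd₂_eq_zero hZ (.inr b) (.inl o)]

end Heights

end Trinity

/-- Proposition 4.1.  Planar trinities do not have recurrent
states: no state admits a non-empty sequence of clockwise moves returning to
itself, i.e. every connected component of the state transition graph is
acyclic. -/
theorem planar_has_no_recurrent_states
    (T : Trinity) (hpl : T.Planar) (s : T.State) :
    ¬ Relation.TransGen T.CWMove s s := by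
  obtain ⟨o, ho⟩ := Option.isSome_iff_exists.mp hpl.2.1
  have drop : ∀ {a b}, Relation.TransGen T.CWMove a b → T.HeightDrop o a b := fun h =>
    h.trans_induction_on (Trinity.heightDrop_of_cwMove hpl ho)
      fun _ _ => Trinity.HeightDrop.trans
  exact fun h => Trinity.not_heightDrop_self hpl.1 (drop h)
end

section
/- Suppose that a sequence of clockwise moves on an irreducible trinity starts and ends with the same state. Then in the sequence, each black triangle of the trinity is changed the same number of times. -/
/-! Follow the colour of the vertex matched to a fixed white triangle `w`.  The clockwise move about
the black triangle `T.wadj w c` turns this colour from `c + 1` into `c + 2`, and no other move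
changes it, so along a closed sequence of clockwise moves the colour performs a closed walk on the
directed triangle of colours and crosses each of its three sides equally often: the three black
triangles adjacent to `w` are changed equally often.  Black triangles adjacent to a common white
one are thus changed equally often, and connectedness of the surface spreads this to all of them. -/

theorem Fin.apply_eq_of_apply_add_one {n : ℕ} {α : Type*} {f : Fin (n + 1) → α}
    (hf : ∀ v, f (v + 1) = f v) (x y : Fin (n + 1)) : f x = f y := by
  have h0 (x : Fin (n + 1)) : f x = f 0 := by
    induction x using Fin.induction with
    | zero => rfl
    | succ i ih => rw [← Fin.coeSucc_eq_succ, hf, ih]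
  rw [h0 x, h0 y]

namespace Trinity

variable {T : Trinity}

namespace CWMoveAt

variable {s t : T.State} {b : T.Black}

theorem vcol_toFun_badj_source (hm : T.CWMoveAt s t b) (c : Fin 3) :
    T.vcol (s.toFun (T.badj b c)) = c + 1 := by
  rw [hm.1.2 c, T.bvert_col]

theorem vcol_toFun_badj_target (hm : T.CWMoveAt s t b) (c : Fin 3) :
    T.vcol (t.toFun (T.badj b c)) = c + 2 := by
  rw [hm.2.1 c, T.bvert_col]

/-- The move pins down the side along which a white triangle meets `b`, even though the axioms
of `Trinity` alone do not. -/
theorem wadj_eq_iff (hm : T.CWMoveAt s t b) {w : T.White} {c : Fin 3} (hc : T.wadj w c = b)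
    (x : Fin 3) : T.wadj w x = b ↔ x = c := by
  refine ⟨fun hx => ?_, fun hx => hx ▸ hc⟩
  have hwx : T.badj b x = w := hx ▸ T.badj_wadj w x
  have hwc : T.badj b c = w := hc ▸ T.badj_wadj w c
  have h := hm.vcol_toFun_badj_target x
  rw [hwx, ← hwc, hm.vcol_toFun_badj_target c] at h
  exact (add_right_cancel h).symm

theorem toFun_eq_of_forall_wadj_ne (hm : T.CWMoveAt s t b) {w : T.White}
    (hw : ∀ c, T.wadj w c ≠ b) : t.toFun w = s.toFun w :=
  hm.2.2 w fun c hc => hw c (hc ▸ T.wadj_badj b c)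

/-- Flow conservation at the colour `v + 2` for the colour walk of the match of `w`: it is entered
only by moves about `T.wadj w v` and left only by moves about `T.wadj w (v + 1)`. -/
theorem balance (hm : T.CWMoveAt s t b) (w : T.White) (v : Fin 3) :
    (if b = T.wadj w (v + 1) then 1 else 0) + (if T.vcol (t.toFun w) = v + 2 then 1 else 0) =
      (if b = T.wadj w v then 1 else 0) + (if T.vcol (s.toFun w) = v + 2 then 1 else 0) := by
  by_cases hb : ∃ c, T.wadj w c = b
  · obtain ⟨c, hc⟩ := hb
    have hw : T.badj b c = w := hc ▸ T.badj_wadj w c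
    have hs : T.vcol (s.toFun w) = c + 1 := hw ▸ hm.vcol_toFun_badj_source c
    have ht : T.vcol (t.toFun w) = c + 2 := hw ▸ hm.vcol_toFun_badj_target c
    simp only [@eq_comm _ b, hm.wadj_eq_iff hc, hs, ht]
    fin_cases v <;> fin_cases c <;> rfl
  · push Not at hb
    simp [Ne.symm (hb _), hm.toFun_eq_of_forall_wadj_ne hb]

end CWMoveAt

namespace CWWalk

variable {s t : T.State} {l : List T.Black}

theorem count_wadj_add (h : T.CWWalk s l t) (w : T.White) (v : Fin 3) :
    l.count (T.wadj w (v + 1)) + (if T.vcol (t.toFun w) = v + 2 then 1 else 0) =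
      l.count (T.wadj w v) + (if T.vcol (s.toFun w) = v + 2 then 1 else 0) := by
  induction l generalizing s with
  | nil => cases h; rfl
  | cons b l ih =>
    cases h with
    | cw hm hwalk =>
      have hstep := hm.balance w v
      have hrest := ih hwalk
      simp only [List.count_cons, beq_iff_eq]
      omega

theorem count_wadj_eq (h : T.CWWalk s l s) (w : T.White) (x y : Fin 3) :
    l.count (T.wadj w x) = l.count (T.wadj w y) :=
  Fin.apply_eq_of_apply_add_one (f := fun c => l.count (T.wadj w c))
    (fun v => by simpa using h.count_wadj_add w v) x y

theorem count_wadj_eq_of_wAdj (h : T.CWWalk s l s) {w w' : T.White} (hw : T.WAdj w w') :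
    l.count (T.wadj w 0) = l.count (T.wadj w' 0) := by
  obtain ⟨c, c', hc⟩ := hw
  rw [h.count_wadj_eq w 0 c, hc, h.count_wadj_eq w' c' 0]

end CWWalk

end Trinity

theorem clockwise_cycle_changes_all_triangles_equally_general
    (T : Trinity) (hsurf : T.Surface)
    (s : T.State) (l : List T.Black) (h : T.CWWalk s l s) :
    ∀ b b' : T.Black, l.count b = l.count b' := by
  have hconst (w w' : T.White) : l.count (T.wadj w 0) = l.count (T.wadj w' 0) := by
    simpa [Relation.reflTransGen_eq_self] using
      (hsurf.1 w w').lift (fun w => l.count (T.wadj w 0)) fun _ _ => h.count_wadj_eq_of_wAdj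
  intro b b'
  simpa only [T.wadj_badj] using hconst (T.badj b 0) (T.badj b' 0)

/-- Proposition 6.4.  Suppose that a sequence of clockwise
moves on an irreducible trinity starts and ends with the same state.  Then in
the sequence, each black triangle of the trinity is changed the same number of
times. -/
theorem clockwise_cycle_changes_all_triangles_equally
    (T : Trinity) (hsurf : T.Surface) (hirr : T.Irreducible)
    (s : T.State) (l : List T.Black) (h : T.CWWalk s l s) :
    ∀ b b' : T.Black, l.count b = l.count b' :=
  clockwise_cycle_changes_all_triangles_equally_general T hsurf s l h
end

section
/- In a cyclic connected component of the state transition graph of a toric trinity, every state is recurrent; that is, for every state in the component there is a non-empty sequence of clockwise moves that starts and ends with that state. Consequently, cyclic components contain no local maxima and no local minima. -/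
/-! Clockwise moves about distinct black triangles commute, forwards and backwards, and a move
is determined by its triangle together with its source or its target.  So a move leaving a
state that lies on a clockwise cycle can be pushed around the cycle: either the cycle itself
makes that move at some point, or the move carries the cycle over to a clockwise cycle through
its target.  Thus recurrence propagates along moves in both directions. -/

namespace LabeledRel

variable {α β : Type*}

inductive Path (r : β → α → α → Prop) : α → List β → α → Prop
  | nil (a : α) : Path r a [] a
  | cons {a b c : α} {x : β} {l : List β} : r x a b → Path r b l c → Path r a (x :: l) c

def Recurrent (r : β → α → α → Prop) (a : α) : Prop := ∃ l ≠ [], Path r a l a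

def converse (r : β → α → α → Prop) : β → α → α → Prop := fun x a b => r x b a

def Deterministic (r : β → α → α → Prop) : Prop :=
  ∀ ⦃x : β⦄ ⦃a b b' : α⦄, r x a b → r x a b' → b = b'

def Diamond (r : β → α → α → Prop) : Prop :=
  ∀ ⦃x y : β⦄ ⦃a b c : α⦄, x ≠ y → r x a b → r y a c → ∃ d, r y b d ∧ r x c d

variable {r : β → α → α → Prop} {a b c : α} {x : β} {l l' : List β}

theorem Path.append (p : Path r a l b) (q : Path r b l' c) : Path r a (l ++ l') c := by
  induction p with
  | nil => exact q
  | cons h _ ih => exact .cons h (ih q)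

theorem Path.converse (p : Path r a l b) : Path (converse r) b l.reverse a := by
  induction p with
  | nil a => exact .nil a
  | cons h _ ih => simpa using ih.append (.cons h (.nil _))

theorem Recurrent.converse (h : Recurrent r a) : Recurrent (converse r) a :=
  let ⟨l, hl, p⟩ := h
  ⟨l.reverse, List.reverse_ne_nil_iff.2 hl, p.converse⟩

theorem Recurrent.exists_step (h : Recurrent r a) : ∃ x b, r x a b := by
  obtain ⟨l, hl, p⟩ := h
  cases p with
  | nil => exact absurd rfl hl
  | cons hx _ => exact ⟨_, _, hx⟩

theorem Path.push (hdet : Deterministic r) (hdia : Diamond r) (p : Path r a l c) (h : r x a b) :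
    (∃ l', Path r b l' c) ∨ ∃ d, Path r b l d ∧ r x c d := by
  induction p generalizing b with
  | nil => exact .inr ⟨b, .nil b, h⟩
  | @cons a a₁ c y l hy p ih =>
    by_cases hxy : x = y
    · subst hxy
      obtain rfl := hdet h hy
      exact .inl ⟨l, p⟩
    · obtain ⟨e, hbe, ha₁e⟩ := hdia hxy h hy
      rcases ih ha₁e with ⟨l', q⟩ | ⟨d, q, hd⟩
      · exact .inl ⟨y :: l', .cons hbe q⟩
      · exact .inr ⟨d, .cons hbe q, hd⟩

theorem Recurrent.of_step (hdet : Deterministic r) (hdia : Diamond r) (ha : Recurrent r a)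
    (h : r x a b) : Recurrent r b := by
  obtain ⟨l, hl, p⟩ := ha
  rcases p.push hdet hdia h with ⟨l', q⟩ | ⟨d, q, hd⟩
  · exact ⟨l' ++ [x], by simp, q.append (.cons h (.nil b))⟩
  · obtain rfl := hdet hd h
    exact ⟨l, hl, q⟩

end LabeledRel

namespace Trinity

variable {T : Trinity}

theorem State.toFun_injective_s18 : Function.Injective (State.toFun : T.State → T.White → T.Vertex) := by
  rintro ⟨f, _⟩ ⟨g, _⟩ (rfl : f = g)
  rfl

theorem bvert_eq_wvert_badj (b : T.Black) {c c' : Fin 3} (h : c' ≠ c) :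
    T.bvert b c' = T.wvert (T.badj b c) c' := by
  simpa only [T.wadj_badj] using T.bvert_wadj (T.badj b c) c c' h

theorem State.injective_of_outer_eq_none (hT : T.outer = none) (s : T.State) :
    Function.Injective s.toFun := fun w w' h =>
  s.injOn w w' (by simp [IsOuter, hT]) (by simp [IsOuter, hT]) h

def State.permute (hT : T.outer = none) (s : T.State) (σ : Equiv.Perm T.White)
    (hσ : ∀ w, ∃ c, s.toFun (σ w) = T.wvert w c) : T.State where
  toFun w := s.toFun (σ w)
  incident := hσ
  injOn w w' _ _ h := σ.injective (s.injective_of_outer_eq_none hT h)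
  not_root _ _ := by simp [IsRoot, IsOuter, hT]
  surj v _ := by
    obtain ⟨w, -, hw⟩ := s.surj v (by simp [IsRoot, IsOuter, hT])
    exact ⟨σ.symm w, by simp [IsOuter, hT], by simpa using hw⟩
  outer_spec w hw := by simp [IsOuter, hT] at hw

/-- Shift `1` is the clockwise rotational pattern at `b`, shift `2` the counter-clockwise one. -/
def State.HasShiftAt (s : T.State) (b : T.Black) (d : Fin 3) : Prop :=
  ∀ c, s.toFun (T.badj b c) = T.bvert b (c + d)

theorem State.HasShiftAt.eq_of_badj_eq {s : T.State} {b₁ b₂ : T.Black} {d c₁ c₂ : Fin 3}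
    (h₁ : s.HasShiftAt b₁ d) (h₂ : s.HasShiftAt b₂ d) (h : T.badj b₁ c₁ = T.badj b₂ c₂) :
    b₁ = b₂ ∧ c₁ = c₂ := by
  have hcol := congrArg T.vcol (h₁ c₁)
  rw [h, h₂ c₂, T.bvert_col, T.bvert_col] at hcol
  obtain rfl : c₁ = c₂ := (add_left_inj d).1 hcol.symm
  exact ⟨by rw [← T.wadj_badj b₁ c₁, h, T.wadj_badj], rfl⟩

theorem State.HasShiftAt.emptyAt {s : T.State} {b : T.Black} {d : Fin 3}
    (h : s.HasShiftAt b d) (hd : d ≠ 0) : s.EmptyAt b := by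
  intro w _ hw
  have hwb : T.badj b (T.vcol (s.toFun w)) = w := by rw [← hw, State.arrowBlack, T.badj_wadj]
  have hcol := congrArg T.vcol (h (T.vcol (s.toFun w)))
  rw [hwb, T.bvert_col] at hcol
  exact hd (left_eq_add.1 hcol)

/-- The argument order makes `T.SwitchAt d e` a relation on states labeled by black triangles. -/
def SwitchAt (d e : Fin 3) (b : T.Black) (s t : T.State) : Prop :=
  s.HasShiftAt b d ∧ t.HasShiftAt b e ∧ ∀ w, (∀ c, w ≠ T.badj b c) → t.toFun w = s.toFun w

theorem cwMoveAt_iff_switchAt {s t : T.State} {b : T.Black} :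
    T.CWMoveAt s t b ↔ T.SwitchAt 1 2 b s t :=
  ⟨fun ⟨hs, ht, hoff⟩ => ⟨hs.2, ht, hoff⟩,
    fun ⟨hs, ht, hoff⟩ => ⟨⟨hs.emptyAt one_ne_zero, hs⟩, ht, hoff⟩⟩

variable {d e : Fin 3} {b b₁ b₂ : T.Black} {s t t' : T.State}

theorem SwitchAt.symm (h : T.SwitchAt d e b s t) : T.SwitchAt e d b t s :=
  ⟨h.2.1, h.1, fun w hw => (h.2.2 w hw).symm⟩

theorem converse_switchAt : LabeledRel.converse (T.SwitchAt d e) = T.SwitchAt e d := by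
  ext b s t
  exact ⟨SwitchAt.symm, SwitchAt.symm⟩

theorem SwitchAt.hasShiftAt_of_disjoint (h : T.SwitchAt d e b₁ s t) {d' : Fin 3}
    (hs : s.HasShiftAt b₂ d') (hdisj : ∀ c₁ c₂, T.badj b₁ c₁ ≠ T.badj b₂ c₂) :
    t.HasShiftAt b₂ d' := fun c => by
  rw [h.2.2 _ fun c₁ => (hdisj c₁ c).symm, hs c]

theorem switchAt_deterministic : LabeledRel.Deterministic (T.SwitchAt d e) := by
  intro b s t t' h h'
  refine State.toFun_injective_s18 (funext fun w => ?_)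
  by_cases hw : ∃ c, w = T.badj b c
  · obtain ⟨c, rfl⟩ := hw
    rw [h.2.1 c, h'.2.1 c]
  · push Not at hw
    rw [h.2.2 w hw, h'.2.2 w hw]

theorem exists_switchAt (hT : T.outer = none) (hs : s.HasShiftAt b d) (he : e ≠ 0) :
    ∃ t, T.SwitchAt d e b s t := by
  let f : Fin 3 ↪ T.White := ⟨T.badj b, fun c₁ c₂ h => (hs.eq_of_badj_eq hs h).2⟩
  let σ := (Equiv.addRight (e - d)).viaFintypeEmbedding f
  have hσ_off : ∀ w, (∀ c, w ≠ T.badj b c) → σ w = w := fun w hw =>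
    Equiv.Perm.viaFintypeEmbedding_apply_notMem_range _ _ fun ⟨c, hc⟩ => hw c hc.symm
  have hσ_shift : ∀ c, s.toFun (σ (T.badj b c)) = T.bvert b (c + e) := fun c => by
    rw [show T.badj b c = f c from rfl, Equiv.Perm.viaFintypeEmbedding_apply_image]
    change s.toFun (T.badj b (c + (e - d))) = _
    rw [hs, add_assoc, sub_add_cancel]
  have hinc : ∀ w, ∃ c, s.toFun (σ w) = T.wvert w c := by
    intro w
    by_cases hw : ∃ c, w = T.badj b c
    · obtain ⟨c, rfl⟩ := hw
      exact ⟨c + e, by rw [hσ_shift, bvert_eq_wvert_badj b (add_ne_left.2 he)]⟩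
    · push Not at hw
      simpa only [hσ_off w hw] using s.incident w
  exact ⟨s.permute hT σ hinc, hs, hσ_shift, fun w hw => congrArg s.toFun (hσ_off w hw)⟩

theorem switchAt_diamond (hT : T.outer = none) (he : e ≠ 0) :
    LabeledRel.Diamond (T.SwitchAt d e) := by
  intro b₁ b₂ s t₁ t₂ hne h₁ h₂
  have hdisj : ∀ c₁ c₂, T.badj b₁ c₁ ≠ T.badj b₂ c₂ := fun c₁ c₂ h =>
    hne (h₁.1.eq_of_badj_eq h₂.1 h).1
  obtain ⟨u, hu⟩ := exists_switchAt hT (h₁.hasShiftAt_of_disjoint h₂.1 hdisj) he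
  refine ⟨u, hu, h₂.hasShiftAt_of_disjoint h₁.1 (fun c₂ c₁ h => hdisj c₁ c₂ h.symm),
    hu.hasShiftAt_of_disjoint h₁.2.1 (fun c₂ c₁ h => hdisj c₁ c₂ h.symm), fun w hw => ?_⟩
  by_cases hw₂ : ∃ c, w = T.badj b₂ c
  · obtain ⟨c, rfl⟩ := hw₂
    rw [hu.2.1 c, h₂.2.1 c]
  · push Not at hw₂
    rw [hu.2.2 w hw₂, h₁.2.2 w hw, h₂.2.2 w hw₂]

theorem cwWalk_iff_path {l : List T.Black} :
    T.CWWalk s l t ↔ LabeledRel.Path (T.SwitchAt 1 2) s l t := by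
  induction l generalizing s with
  | nil => exact ⟨fun h => by cases h; exact .nil _, fun h => by cases h; exact .nil _⟩
  | cons b l ih =>
    constructor
    · rintro (_ | ⟨m, p⟩)
      exact .cons (cwMoveAt_iff_switchAt.1 m) (ih.1 p)
    · rintro (_ | ⟨m, p⟩)
      exact Walk.cw (cwMoveAt_iff_switchAt.2 m) (ih.2 p)

theorem recurrent_iff : T.Recurrent s ↔ LabeledRel.Recurrent (T.SwitchAt 1 2) s := by
  simp only [Recurrent, LabeledRel.Recurrent, cwWalk_iff_path]

theorem Recurrent.of_cwMoveAt (hT : T.outer = none) (hs : T.Recurrent s) (m : T.CWMoveAt s t b) :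
    T.Recurrent t := by
  rw [recurrent_iff] at hs ⊢
  exact hs.of_step switchAt_deterministic (switchAt_diamond hT (by decide))
    (cwMoveAt_iff_switchAt.1 m)

theorem Recurrent.of_cwMoveAt_to (hT : T.outer = none) (ht : T.Recurrent t)
    (m : T.CWMoveAt s t b) : T.Recurrent s := by
  rw [recurrent_iff] at ht ⊢
  have ht' := ht.converse
  rw [converse_switchAt] at ht'
  have hs := ht'.of_step switchAt_deterministic (switchAt_diamond hT (by decide))
    (cwMoveAt_iff_switchAt.1 m).symm
  simpa only [converse_switchAt] using hs.converse

theorem Recurrent.of_walk (hT : T.outer = none) {l : List (T.Black × Bool)} (hw : T.Walk s l t)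
    (hs : T.Recurrent s) : T.Recurrent t := by
  induction hw with
  | nil => exact hs
  | cw m _ ih => exact ih (hs.of_cwMoveAt hT m)
  | ccw m _ ih => exact ih (hs.of_cwMoveAt_to hT m)

theorem Recurrent.exists_cwMoveAt_from (hs : T.Recurrent s) : ∃ t b, T.CWMoveAt s t b := by
  obtain ⟨b, t, h⟩ := (recurrent_iff.1 hs).exists_step
  exact ⟨t, b, cwMoveAt_iff_switchAt.2 h⟩

theorem Recurrent.exists_cwMoveAt_to (hs : T.Recurrent s) : ∃ t b, T.CWMoveAt t s b := by
  have hs' := (recurrent_iff.1 hs).converse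
  rw [converse_switchAt] at hs'
  obtain ⟨b, t, h⟩ := hs'.exists_step
  exact ⟨t, b, cwMoveAt_iff_switchAt.2 h.symm⟩

end Trinity

/-- Proposition 6.5 and its corollary.  In a cyclic
connected component of the state transition graph of a toric trinity, every
state is recurrent: there is a non-empty sequence of clockwise moves starting
and ending with it.  Consequently, cyclic components contain no local maxima
(every state admits a clockwise move) and no local minima (every state admits a
counter-clockwise move). -/
theorem cyclic_component_all_states_recurrent
    (T : Trinity) (ht : T.Toric) (s₀ : T.State) (hrec : T.Recurrent s₀)
    (s : T.State) (hs : T.Reaches s₀ s) :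
    T.Recurrent s ∧ (∃ (t : T.State) (b : T.Black), T.CWMoveAt s t b) ∧
      ∃ (t : T.State) (b : T.Black), T.CWMoveAt t s b := by
  obtain ⟨l, hw⟩ := hs
  have hr : T.Recurrent s := hrec.of_walk ht.2.1 hw
  exact ⟨hr, hr.exists_cwMoveAt_from, hr.exists_cwMoveAt_to⟩
end
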